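/- arXiv:0706.1331 — 3 statements merged into one kernel-verified Lean document; each statement's English description precedes it below -/
import Mathlib

section
/- There exists a C² function f : ℝ³ → ℝ³ such that: (1) for every u ∈ ℝ³ and all i ≠ j, ∂f_i/∂u_j(u) > 0; (2) there exist three points e₁, e₂, e₃ ∈ ℝ³ such that every differentiable function u : [0,∞) → ℝ³ satisfying u'(t) = f(u(t)) for all t ≥ 0 converges, as t → ∞, to one of e₁, e₂, e₃; (3) the set of non-constant C² functions u : [−π/2, π/2] → ℝ³ satisfying u''(x) + f(u(x)) = 0 for all x ∈ (−π/2, π/2) together with the Neumann boundary conditions u'(−π/2) = u'(π/2) = 0 has the cardinality of the continuum. -/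
open Real Set Filter Topology Cardinal
open scoped NNReal

universe u

/-!
Take `f u = g (m u) • 𝟙 - 3 • (u - m u • 𝟙)`, where `𝟙 = (1, 1, 1)`, `m u` is the mean of the
coordinates and `g w = 4w - 5ψ(w - 1) + 5ψ(-1 - w)` with `ψ = (t - arctan t)⁺`. Since `ψ' = t² / (1 + t²)`
lies in `[0, 1)`, `g` is an odd `C²` function with `g' ∈ (-1, 4]` and `g w = 4w` on `[-1, 1]`;
its zeros are `0` and `±R` for a single `R ∈ [3, 13]`. Off the diagonal
`∂f_i/∂u_j = g'(m)/3 + 1 > 0`.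

Along a solution of `u' = f u` the mean solves the scalar equation `m' = g m`, so it is monotone
and converges to a zero of `g`, while the deviation `u - m • 𝟙` solves `v' = -3v` and decays;
hence `u` tends to `0`, `R • 𝟙` or `-R • 𝟙`. On the other hand `f (c • 𝟙) = 4c • 𝟙` for
`|c| ≤ 1`, so every `a cos (2x) • 𝟙` with `0 < a ≤ 1` is a non-constant Neumann equilibrium.
There are no more than `𝔠` equilibria at all, because they are continuous and hence determined
by their values on a countable dense set.
-/

section Indicator

variable {E : Type*} [NormedAddCommGroup E] [NormedSpace ℝ E] {φ φ' φ'' : ℝ → E} {a : ℝ}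

theorem hasDerivAt_indicator_Ici (hφ : ∀ x, HasDerivAt φ (φ' x) x) (ha : φ a = 0)
    (ha' : φ' a = 0) (x : ℝ) : HasDerivAt ((Ici a).indicator φ) ((Ici a).indicator φ' x) x := by
  rcases lt_trichotomy x a with hx | rfl | hx
  · have hzero : (Ici a).indicator φ =ᶠ[𝓝 x] fun _ => 0 := by
      filter_upwards [Iio_mem_nhds hx] with y hy
      exact indicator_of_notMem (not_le.2 hy) _
    rw [indicator_of_notMem (show x ∉ Ici a from not_le.2 hx)]
    exact (hasDerivAt_const x 0).congr_of_eventuallyEq hzero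
  · have hleft : HasDerivWithinAt ((Ici x).indicator φ) (φ' x) (Iic x) x := by
      refine ha' ▸ (hasDerivWithinAt_const x _ 0).congr (fun y hy => ?_) (by simp [ha])
      rcases (mem_Iic.1 hy).lt_or_eq with hy | rfl
      · exact indicator_of_notMem (not_le.2 hy) _
      · simp [ha]
    have hright : HasDerivWithinAt ((Ici x).indicator φ) (φ' x) (Ici x) x :=
      (hφ x).hasDerivWithinAt.congr (fun y hy => indicator_of_mem hy _)
        (indicator_of_mem (mem_Ici.2 le_rfl) _)
    rw [indicator_of_mem (mem_Ici.2 le_rfl), ← hasDerivWithinAt_univ, ← Iic_union_Ici]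
    exact hleft.union hright
  · have hφeq : (Ici a).indicator φ =ᶠ[𝓝 x] φ := by
      filter_upwards [Ioi_mem_nhds hx] with y hy
      exact indicator_of_mem (le_of_lt hy) _
    rw [indicator_of_mem (mem_Ici.2 hx.le)]
    exact (hφ x).congr_of_eventuallyEq hφeq

theorem contDiff_two_indicator_Ici (hφ : ∀ x, HasDerivAt φ (φ' x) x)
    (hφ' : ∀ x, HasDerivAt φ' (φ'' x) x) (hφ'' : Continuous φ'') (ha : φ a = 0)
    (ha' : φ' a = 0) (ha'' : φ'' a = 0) : ContDiff ℝ 2 ((Ici a).indicator φ) := by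
  have h1 := hasDerivAt_indicator_Ici hφ ha ha'
  have h2 := hasDerivAt_indicator_Ici hφ' ha' ha''
  rw [show (2 : WithTop ℕ∞) = 1 + 1 from rfl, contDiff_succ_iff_deriv]
  refine ⟨fun x => (h1 x).differentiableAt, by simp, ?_⟩
  rw [funext fun x => (h1 x).deriv, show (1 : WithTop ℕ∞) = 0 + 1 from rfl,
    contDiff_succ_iff_deriv]
  refine ⟨fun x => (h2 x).differentiableAt, by simp, ?_⟩
  rw [funext fun x => (h2 x).deriv, contDiff_zero, ← piecewise_eq_indicator]
  exact hφ''.piecewise (by simp [ha'']) continuous_const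

end Indicator

section ScalarODE

variable {H s : ℝ → ℝ}

theorem eqOn_Ici_of_hasDerivAt_of_eq_zero {K : ℝ≥0} (hH : LipschitzWith K H)
    (hs : ∀ t, 0 ≤ t → HasDerivAt s (H (s t)) t) {t₀ : ℝ} (ht₀ : 0 ≤ t₀)
    (hz : H (s t₀) = 0) : EqOn s (fun _ => s t₀) (Ici t₀) := fun _ ht =>
  ODE_solution_unique (v := fun _ => H) (fun _ => hH)
    (fun τ hτ => (hs τ (ht₀.trans hτ.1)).continuousAt.continuousWithinAt)
    (fun τ hτ => (hs τ (ht₀.trans hτ.1)).hasDerivWithinAt) continuousOn_const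
    (fun τ _ => hz ▸ hasDerivWithinAt_const τ _ _) rfl ⟨ht, le_rfl⟩

theorem eq_zero_of_tendsto_of_hasDerivAt {s' : ℝ → ℝ} {L l : ℝ}
    (hs : Tendsto s atTop (𝓝 L)) (hderiv : ∀ t, 0 ≤ t → HasDerivAt s (s' t) t)
    (hs' : Tendsto s' atTop (𝓝 l)) : l = 0 := by
  have hmvt : ∀ t, 0 ≤ t → ∃ c ∈ Ioo t (t + 1), s' c = s (t + 1) - s t := fun t ht => by
    obtain ⟨c, hc, hc'⟩ := exists_hasDerivAt_eq_slope s s' (lt_add_one t)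
      (fun x hx => (hderiv x (ht.trans hx.1)).continuousAt.continuousWithinAt)
      (fun x hx => hderiv x (ht.trans hx.1.le))
    exact ⟨c, hc, by rwa [add_sub_cancel_left, div_one] at hc'⟩
  choose! c hc hsc using hmvt
  have hc_tendsto : Tendsto c atTop atTop := by
    refine tendsto_atTop_mono' atTop ?_ tendsto_id
    filter_upwards [eventually_ge_atTop 0] with t ht
    exact (hc t ht).1.le
  have hincr : Tendsto (fun t => s (t + 1) - s t) atTop (𝓝 l) := by
    refine (hs'.comp hc_tendsto).congr' ?_
    filter_upwards [eventually_ge_atTop 0] with t ht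
    exact hsc t ht
  have hincr' : Tendsto (fun t => s (t + 1) - s t) atTop (𝓝 (L - L)) :=
    (hs.comp (tendsto_atTop_add_const_right _ 1 tendsto_id)).sub hs
  simpa using tendsto_nhds_unique hincr hincr'

theorem exists_tendsto_of_hasDerivAt_of_pos (hH : Continuous H) (hbdd : BddAbove {x | 0 < H x})
    (hs : ∀ t, 0 ≤ t → HasDerivAt s (H (s t)) t) (hpos : ∀ t, 0 ≤ t → 0 < H (s t)) :
    ∃ L, H L = 0 ∧ Tendsto s atTop (𝓝 L) := by
  have hmono : Monotone (fun t : Ici (0 : ℝ) => s t) := by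
    refine fun a b hab => monotoneOn_of_hasDerivWithinAt_nonneg (convex_Ici 0)
      (fun t ht => (hs t ht).continuousAt.continuousWithinAt)
      (fun t ht => (hs t (interior_subset ht)).hasDerivWithinAt)
      (fun t ht => (hpos t (interior_subset ht)).le) a.2 b.2 hab
  obtain ⟨B, hB⟩ := hbdd
  have hbdd' : BddAbove (range (fun t : Ici (0 : ℝ) => s t)) :=
    ⟨B, by rintro _ ⟨t, rfl⟩; exact hB (hpos t t.2)⟩
  obtain ⟨L, hlim⟩ : ∃ L, Tendsto s atTop (𝓝 L) :=
    ⟨_, tendsto_comp_val_Ici_atTop.1 (tendsto_atTop_ciSup hmono hbdd')⟩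
  exact ⟨L, eq_zero_of_tendsto_of_hasDerivAt hlim hs ((hH.tendsto _).comp hlim), hlim⟩

theorem exists_tendsto_of_hasDerivAt {K : ℝ≥0} (hH : LipschitzWith K H)
    (hpos : BddAbove {x | 0 < H x}) (hneg : BddBelow {x | H x < 0})
    (hs : ∀ t, 0 ≤ t → HasDerivAt s (H (s t)) t) : ∃ L, H L = 0 ∧ Tendsto s atTop (𝓝 L) := by
  by_cases hz : ∃ t₀, 0 ≤ t₀ ∧ H (s t₀) = 0
  · obtain ⟨t₀, ht₀, hz⟩ := hz
    refine ⟨s t₀, hz, tendsto_const_nhds.congr' ?_⟩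
    filter_upwards [eventually_ge_atTop t₀] with t ht
    exact (eqOn_Ici_of_hasDerivAt_of_eq_zero hH hs ht₀ hz ht).symm
  push Not at hz
  have hsign : (∀ t, 0 ≤ t → 0 < H (s t)) ∨ ∀ t, 0 ≤ t → H (s t) < 0 := by
    by_contra! h
    obtain ⟨⟨a, ha, ha'⟩, b, hb, hb'⟩ := h
    obtain ⟨t, ht, ht'⟩ := isPreconnected_Ici.intermediate_value ha hb
      (hH.continuous.comp_continuousOn fun t ht => (hs t ht).continuousAt.continuousWithinAt)
      ⟨ha', hb'⟩
    exact hz t ht ht'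
  rcases hsign with hsign | hsign
  · exact exists_tendsto_of_hasDerivAt_of_pos hH.continuous hpos hs hsign
  · obtain ⟨B, hB⟩ := hneg
    -- `-s` solves the reflected equation `σ' = -H (-σ)`, to which the positive case applies.
    obtain ⟨L, hL, hlim⟩ := exists_tendsto_of_hasDerivAt_of_pos (H := fun x => -H (-x))
      (s := fun t => -s t) (hH.continuous.comp continuous_neg).neg
      ⟨-B, fun x hx => le_neg_of_le_neg (hB (show H (-x) < 0 from neg_pos.1 hx))⟩
      (fun t ht => by rw [neg_neg]; exact (hs t ht).neg) (fun t ht => by simpa using hsign t ht)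
    exact ⟨-L, neg_eq_zero.1 hL, by simpa using hlim.neg⟩

end ScalarODE

theorem tendsto_zero_of_hasDerivAt_eq_neg_smul {E : Type*} [NormedAddCommGroup E]
    [NormedSpace ℝ E] {c : ℝ} (hc : 0 < c) {v : ℝ → E}
    (hv : ∀ t, 0 ≤ t → HasDerivAt v (-c • v t) t) : Tendsto v atTop (𝓝 0) := by
  have hsol (t : ℝ) : HasDerivAt (fun t => exp (-c * t) • v 0) (-c • exp (-c * t) • v 0) t := by
    refine (((hasDerivAt_id' t).const_mul (-c)).exp.smul_const (v 0)).congr_deriv ?_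
    rw [smul_smul]
    ring_nf
  have heq : EqOn v (fun t => exp (-c * t) • v 0) (Ici 0) := fun t ht =>
    ODE_solution_unique (v := fun _ x => -c • x) (fun _ => lipschitzWith_smul (-c))
      (fun τ hτ => (hv τ hτ.1).continuousAt.continuousWithinAt)
      (fun τ hτ => (hv τ hτ.1).hasDerivWithinAt)
      (fun τ _ => (hsol τ).continuousAt.continuousWithinAt)
      (fun τ _ => (hsol τ).hasDerivWithinAt) (by simp) ⟨ht, le_rfl⟩
  have hexp : Tendsto (fun t => exp (-c * t)) atTop (𝓝 0) :=
    tendsto_exp_atBot.comp (tendsto_id.const_mul_atTop_of_neg (neg_lt_zero.2 hc))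
  refine (zero_smul ℝ (v 0) ▸ hexp.smul_const (v 0)).congr' ?_
  filter_upwards [eventually_ge_atTop 0] with t ht
  exact (heq ht).symm

theorem mk_setOf_continuous_le {X Y : Type u} [TopologicalSpace X]
    [TopologicalSpace.SeparableSpace X] [TopologicalSpace Y] [T2Space Y] [Nonempty Y] :
    #{v : X → Y | Continuous v} ≤ #Y ^ ℵ₀ := by
  obtain ⟨D, hDc, hD⟩ := TopologicalSpace.exists_countable_dense X
  have hinj : Function.Injective fun v : {v : X → Y | Continuous v} => fun d : D => v.1 d :=
    fun v w h => Subtype.ext (Continuous.ext_on hD v.2 w.2 fun x hx => congrFun h ⟨x, hx⟩)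
  calc #{v : X → Y | Continuous v} ≤ #(D → Y) := mk_le_of_injective hinj
    _ = #Y ^ #D := (power_def Y D).symm
    _ ≤ #Y ^ ℵ₀ := power_le_power_left (mk_ne_zero Y) (mk_le_aleph0_iff.2 hDc.to_subtype)

theorem mk_euclideanSpace_le {ι : Type} [Fintype ι] : #(EuclideanSpace ℝ ι) ≤ 𝔠 := by
  rw [mk_congr (EuclideanSpace.equiv ι ℝ).toEquiv, ← power_def, mk_real, mk_fintype]
  exact power_nat_le aleph0_le_continuum

noncomputable def ramp : ℝ → ℝ := (Ici 0).indicator fun t => t - arctan t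

noncomputable def rampDeriv : ℝ → ℝ := (Ici 0).indicator fun t => t ^ 2 / (1 + t ^ 2)

theorem hasDerivAt_id_sub_arctan (t : ℝ) :
    HasDerivAt (fun t => t - arctan t) (t ^ 2 / (1 + t ^ 2)) t := by
  refine ((hasDerivAt_id' t).sub (hasDerivAt_arctan t)).congr_deriv ?_
  field_simp
  ring

theorem hasDerivAt_sq_div_one_add_sq (t : ℝ) :
    HasDerivAt (fun t => t ^ 2 / (1 + t ^ 2)) (2 * t / (1 + t ^ 2) ^ 2) t := by
  have hsq : HasDerivAt (fun t : ℝ => t ^ 2) (2 * t) t := by simpa using hasDerivAt_pow 2 t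
  refine (hsq.div (hsq.const_add 1) (by positivity)).congr_deriv ?_
  field_simp
  ring

theorem hasDerivAt_ramp (t : ℝ) : HasDerivAt ramp (rampDeriv t) t :=
  hasDerivAt_indicator_Ici hasDerivAt_id_sub_arctan (by simp) (by simp) t

theorem contDiff_ramp : ContDiff ℝ 2 ramp :=
  contDiff_two_indicator_Ici hasDerivAt_id_sub_arctan hasDerivAt_sq_div_one_add_sq
    (by fun_prop (disch := intro; positivity)) (by simp) (by simp) (by simp)

theorem ramp_of_nonpos {t : ℝ} (ht : t ≤ 0) : ramp t = 0 := by
  rcases ht.lt_or_eq with ht | rfl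
  · exact indicator_of_notMem (not_le.2 ht) _
  · simp [ramp]

theorem rampDeriv_of_nonpos {t : ℝ} (ht : t ≤ 0) : rampDeriv t = 0 := by
  rcases ht.lt_or_eq with ht | rfl
  · exact indicator_of_notMem (not_le.2 ht) _
  · simp [rampDeriv]

theorem rampDeriv_mem_Ico (t : ℝ) : rampDeriv t ∈ Ico 0 1 := by
  by_cases ht : 0 ≤ t
  · rw [rampDeriv, indicator_of_mem (mem_Ici.2 ht), mem_Ico,
      div_lt_one (by positivity)]
    exact ⟨by positivity, by linarith⟩
  · rw [rampDeriv_of_nonpos (not_le.1 ht).le]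
    exact ⟨le_rfl, one_pos⟩

noncomputable def bistable (w : ℝ) : ℝ := 4 * w - 5 * ramp (w - 1) + 5 * ramp (-1 - w)

noncomputable def bistableDeriv (w : ℝ) : ℝ :=
  4 - 5 * rampDeriv (w - 1) - 5 * rampDeriv (-1 - w)

theorem hasDerivAt_bistable (w : ℝ) : HasDerivAt bistable (bistableDeriv w) w := by
  have h₁ := (hasDerivAt_ramp (w - 1)).comp w ((hasDerivAt_id' w).sub_const 1)
  have h₂ := (hasDerivAt_ramp (-1 - w)).comp w ((hasDerivAt_id' w).const_sub (-1))
  refine ((((hasDerivAt_id' w).const_mul 4).sub (h₁.const_mul 5)).add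
    (h₂.const_mul 5)).congr_deriv ?_
  rw [bistableDeriv]
  ring

theorem contDiff_bistable : ContDiff ℝ 2 bistable := by
  unfold bistable
  have := contDiff_ramp
  fun_prop

theorem bistableDeriv_mem_Ioc (w : ℝ) : bistableDeriv w ∈ Ioc (-1) 4 := by
  have h₁ := rampDeriv_mem_Ico (w - 1)
  have h₂ := rampDeriv_mem_Ico (-1 - w)
  rcases le_total w 1 with hw | hw
  · rw [bistableDeriv, rampDeriv_of_nonpos (by linarith : w - 1 ≤ 0)]
    constructor <;> linarith [h₂.1, h₂.2]
  · rw [bistableDeriv, rampDeriv_of_nonpos (by linarith : -1 - w ≤ 0)]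
    constructor <;> linarith [h₁.1, h₁.2]

theorem lipschitzWith_bistable : LipschitzWith 4 bistable := by
  refine lipschitzWith_of_nnnorm_deriv_le (fun w => (hasDerivAt_bistable w).differentiableAt)
    fun w => ?_
  rw [(hasDerivAt_bistable w).deriv, ← NNReal.coe_le_coe, coe_nnnorm, Real.norm_eq_abs,
    abs_le]
  have := bistableDeriv_mem_Ioc w
  constructor <;> norm_num <;> linarith [this.1, this.2]

theorem bistable_neg (w : ℝ) : bistable (-w) = -bistable w := by
  rw [bistable, bistable, show -w - 1 = -1 - w by ring, show -1 - -w = w - 1 by ring]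
  ring

theorem bistable_of_mem_Icc {w : ℝ} (hw : w ∈ Icc (-1) 1) : bistable w = 4 * w := by
  rw [bistable, ramp_of_nonpos (by linarith [hw.2]), ramp_of_nonpos (by linarith [hw.1])]
  ring

theorem bistable_of_one_le {w : ℝ} (hw : 1 ≤ w) : bistable w = 5 - w + 5 * arctan (w - 1) := by
  rw [bistable, ramp_of_nonpos (t := -1 - w) (by linarith), ramp,
    indicator_of_mem (mem_Ici.2 (by linarith))]
  ring

theorem bistable_pos {w : ℝ} (h₀ : 0 < w) (h₃ : w ≤ 3) : 0 < bistable w := by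
  rcases le_total w 1 with hw | hw
  · rw [bistable_of_mem_Icc ⟨by linarith, hw⟩]
    positivity
  · rw [bistable_of_one_le hw]
    have := arctan_nonneg.2 (by linarith : (0 : ℝ) ≤ w - 1)
    linarith

theorem bistable_lt_zero {w : ℝ} (hw : 13 ≤ w) : bistable w < 0 := by
  rw [bistable_of_one_le (by linarith)]
  linarith [arctan_lt_pi_div_two (w - 1), pi_lt_d2]

theorem strictAntiOn_bistable : StrictAntiOn bistable (Ici 3) := by
  refine strictAntiOn_of_deriv_neg (convex_Ici 3)
    (contDiff_bistable.continuous.continuousOn) fun w hw => ?_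
  rw [interior_Ici, mem_Ioi] at hw
  rw [(hasDerivAt_bistable w).deriv, bistableDeriv,
    rampDeriv_of_nonpos (t := -1 - w) (by linarith), rampDeriv,
    indicator_of_mem (mem_Ici.2 (by linarith))]
  have : 4 < 5 * ((w - 1) ^ 2 / (1 + (w - 1) ^ 2)) := by
    rw [mul_div_assoc', lt_div_iff₀ (by positivity)]
    nlinarith
  linarith

theorem exists_bistable_eq_zero_iff :
    ∃ R, ∀ w, bistable w = 0 ↔ w = 0 ∨ w = R ∨ w = -R := by
  obtain ⟨R, hR, hR0⟩ := intermediate_value_Icc' (by norm_num : (3 : ℝ) ≤ 13)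
    contDiff_bistable.continuous.continuousOn
    ⟨(bistable_lt_zero le_rfl).le, (bistable_pos (by norm_num) le_rfl).le⟩
  have hpos : ∀ w, 0 < w → bistable w = 0 → w = R := fun w hw hw0 =>
    strictAntiOn_bistable.injOn
      (mem_Ici.2 (not_lt.1 fun h => (bistable_pos hw h.le).ne' hw0)) hR.1 (hw0.trans hR0.symm)
  refine ⟨R, fun w => ⟨fun hw => ?_, ?_⟩⟩
  · rcases lt_trichotomy w 0 with h | h | h
    · exact Or.inr (Or.inr (by linarith [hpos (-w) (by linarith) (by simp [bistable_neg, hw])]))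
    · exact Or.inl h
    · exact Or.inr (Or.inl (hpos w h hw))
  · rintro (rfl | rfl | rfl)
    · simpa using bistable_of_mem_Icc (w := 0) (by norm_num)
    · exact hR0
    · rw [bistable_neg, hR0, neg_zero]

theorem bddAbove_bistable_pos : BddAbove {w | 0 < bistable w} :=
  ⟨13, fun _ hw => le_of_not_gt fun h => (bistable_lt_zero h.le).not_gt hw⟩

theorem bddBelow_bistable_neg : BddBelow {w | bistable w < 0} :=
  ⟨-13, fun w hw => le_of_not_gt fun h => (bistable_lt_zero (w := -w) (by linarith)).not_gt
    (by rw [bistable_neg]; exact neg_pos.2 hw)⟩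

local notation "ℝ³" => EuclideanSpace ℝ (Fin 3)

noncomputable def ones : ℝ³ := WithLp.toLp 2 fun _ => 1

noncomputable def mean : ℝ³ →L[ℝ] ℝ := (3 : ℝ)⁻¹ • ∑ i, EuclideanSpace.proj i

noncomputable def coopField (u : ℝ³) : ℝ³ :=
  bistable (mean u) • ones - (3 : ℝ) • (u - mean u • ones)

theorem mean_apply (u : ℝ³) : mean u = (u 0 + u 1 + u 2) / 3 := by
  simp [mean, Fin.sum_univ_three, div_eq_inv_mul, mul_add]

theorem mean_ones : mean ones = 1 := by
  norm_num [mean_apply, ones]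

theorem mean_coopField (u : ℝ³) : mean (coopField u) = bistable (mean u) := by
  simp [coopField, mean_ones]

theorem coopField_smul_ones {c : ℝ} (hc : c ∈ Icc (-1) 1) :
    coopField (c • ones) = (4 * c) • ones := by
  simp [coopField, mean_ones, bistable_of_mem_Icc hc]

theorem contDiff_coopField : ContDiff ℝ 2 coopField := by
  unfold coopField
  have := contDiff_bistable
  fun_prop

theorem hasFDerivAt_coopField (u : ℝ³) :
    HasFDerivAt coopField ((bistableDeriv (mean u) • mean).smulRight ones -
      (3 : ℝ) • (ContinuousLinearMap.id ℝ ℝ³ - mean.smulRight ones)) u :=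
  (((hasDerivAt_bistable (mean u)).comp_hasFDerivAt u mean.hasFDerivAt).smul_const ones).sub
    (((hasFDerivAt_id u).sub (mean.hasFDerivAt.smul_const ones)).const_smul (3 : ℝ))

theorem fderiv_coopField_single_pos (u : ℝ³) {i j : Fin 3} (hij : i ≠ j) :
    0 < fderiv ℝ coopField u (EuclideanSpace.single j 1) i := by
  have hmean : mean (EuclideanSpace.single j 1) = 3⁻¹ := by
    fin_cases j <;> simp [mean_apply]
  have hval : fderiv ℝ coopField u (EuclideanSpace.single j 1) i =
      bistableDeriv (mean u) / 3 + 1 := by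
    rw [(hasFDerivAt_coopField u).fderiv]
    simp [hmean, ones, hij, div_eq_mul_inv]
  rw [hval]
  linarith [(bistableDeriv_mem_Ioc (mean u)).1]

theorem exists_tendsto_of_hasDerivAt_coopField {u : ℝ → ℝ³}
    (hu : ∀ t, 0 ≤ t → HasDerivAt u (coopField (u t)) t) :
    ∃ m, bistable m = 0 ∧ Tendsto u atTop (𝓝 (m • ones)) := by
  have hmean (t : ℝ) (ht : 0 ≤ t) :
      HasDerivAt (fun t => mean (u t)) (bistable (mean (u t))) t :=
    mean_coopField (u t) ▸ mean.hasFDerivAt.comp_hasDerivAt t (hu t ht)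
  obtain ⟨m, hm, hlim⟩ := exists_tendsto_of_hasDerivAt lipschitzWith_bistable
    bddAbove_bistable_pos bddBelow_bistable_neg hmean
  have hdev : Tendsto (fun t => u t - mean (u t) • ones) atTop (𝓝 0) :=
    tendsto_zero_of_hasDerivAt_eq_neg_smul three_pos fun t ht =>
      ((hu t ht).sub ((hmean t ht).smul_const ones)).congr_deriv (by rw [coopField]; module)
  refine ⟨m, hm, ?_⟩
  simpa using hdev.add (hlim.smul_const ones)

def neumannEquilibria (f : ℝ³ → ℝ³) : Set (Icc (-(π / 2)) (π / 2) → ℝ³) :=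
  {v | ∃ u u' u'' : ℝ → ℝ³,
    (∀ x ∈ Icc (-(π / 2)) (π / 2), HasDerivWithinAt u (u' x) (Icc (-(π / 2)) (π / 2)) x) ∧
    (∀ x ∈ Icc (-(π / 2)) (π / 2), HasDerivWithinAt u' (u'' x) (Icc (-(π / 2)) (π / 2)) x) ∧
    ContinuousOn u'' (Icc (-(π / 2)) (π / 2)) ∧
    (∀ x ∈ Ioo (-(π / 2)) (π / 2), u'' x + f (u x) = 0) ∧
    u' (-(π / 2)) = 0 ∧ u' (π / 2) = 0 ∧
    (∃ x ∈ Icc (-(π / 2)) (π / 2), ∃ y ∈ Icc (-(π / 2)) (π / 2), u x ≠ u y) ∧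
    v = fun x => u x.1}

theorem neumannEquilibria_subset_continuous (f : ℝ³ → ℝ³) :
    neumannEquilibria f ⊆ {v | Continuous v} := by
  rintro _ ⟨u, u', -, hu, -, -, -, -, -, -, rfl⟩
  exact (HasDerivWithinAt.continuousOn hu).domRestrict

theorem hasDerivAt_mul_cos_two_mul (a x : ℝ) :
    HasDerivAt (fun x => a * cos (2 * x)) (a * (-2 * sin (2 * x))) x := by
  refine (((hasDerivAt_id' x).const_mul 2).cos.const_mul a).congr_deriv ?_
  ring

theorem hasDerivAt_mul_sin_two_mul (a x : ℝ) :
    HasDerivAt (fun x => a * (-2 * sin (2 * x))) (a * (-4 * cos (2 * x))) x := by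
  refine ((((hasDerivAt_id' x).const_mul 2).sin.const_mul (-2)).const_mul a).congr_deriv ?_
  ring

theorem cos_mem_neumannEquilibria_coopField {a : ℝ} (ha : a ∈ Ioc 0 1) :
    (fun x : Icc (-(π / 2)) (π / 2) => (a * cos (2 * x)) • ones) ∈
      neumannEquilibria coopField := by
  refine ⟨fun x => (a * cos (2 * x)) • ones, fun x => (a * (-2 * sin (2 * x))) • ones,
    fun x => (a * (-4 * cos (2 * x))) • ones,
    fun x _ => ((hasDerivAt_mul_cos_two_mul a x).smul_const ones).hasDerivWithinAt,
    fun x _ => ((hasDerivAt_mul_sin_two_mul a x).smul_const ones).hasDerivWithinAt,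
    by fun_prop, fun x _ => ?_, by simp [show 2 * (π / 2) = π by ring],
    by simp [show 2 * (π / 2) = π by ring], ⟨0, ?_, π / 2, ?_, ?_⟩, rfl⟩
  · have hc : a * cos (2 * x) ∈ Icc (-1) 1 := by
      rw [mem_Icc, ← abs_le, abs_mul, abs_of_pos ha.1]
      exact mul_le_one₀ ha.2 (abs_nonneg _) (abs_cos_le_one _)
    rw [coopField_smul_ones hc, ← add_smul,
      show a * (-4 * cos (2 * x)) + 4 * (a * cos (2 * x)) = 0 by ring, zero_smul]
  · exact ⟨neg_nonpos.2 pi_div_two_pos.le, pi_div_two_pos.le⟩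
  · exact ⟨by linarith [pi_div_two_pos], le_rfl⟩
  · intro h
    have := congrArg mean h
    simp [mean_ones, show 2 * (π / 2) = π by ring] at this
    linarith [ha.1]

theorem mk_neumannEquilibria_coopField : #(neumannEquilibria coopField) = 𝔠 := by
  refine le_antisymm ?_ ?_
  · calc #(neumannEquilibria coopField)
        ≤ #{v : Icc (-(π / 2)) (π / 2) → ℝ³ | Continuous v} :=
          mk_le_mk_of_subset (neumannEquilibria_subset_continuous coopField)
      _ ≤ #ℝ³ ^ ℵ₀ := mk_setOf_continuous_le
      _ ≤ 𝔠 ^ ℵ₀ := power_le_power_right mk_euclideanSpace_le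
      _ = 𝔠 := continuum_power_aleph0
  · have hinj : Function.Injective fun a : Ioc (0 : ℝ) 1 =>
        (⟨_, cos_mem_neumannEquilibria_coopField a.2⟩ : neumannEquilibria coopField) := by
      intro a b hab
      have := congrArg mean (congrFun (congrArg Subtype.val hab)
        ⟨0, neg_nonpos.2 pi_div_two_pos.le, pi_div_two_pos.le⟩)
      simp only [mul_zero, cos_zero, mul_one, map_smul, mean_ones, smul_eq_mul] at this
      exact Subtype.ext this
    exact (mk_Ioc_real zero_lt_one).symm.le.trans (mk_le_of_injective hinj)

/-- **Theorem (application: strongly cooperative reaction–diffusion system).**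
There is a `C²` vector field `f : ℝ³ → ℝ³` with everywhere-positive off-diagonal
partial derivatives such that every solution of the reaction system `u' = f(u)`
converges to one of only three equilibria, while the set of nonhomogeneous
(i.e. non-constant) equilibria of the reaction–diffusion system
`u'' + f(u) = 0` on `(-π/2, π/2)` with Neumann boundary conditions has the
cardinality of the continuum.  An equilibrium is a `C²` function
`u : [-π/2, π/2] → ℝ³` (encoded here by `u, u', u''` with derivatives taken
within the interval and `u''` continuous on it). -/
theorem stmt2 :
    ∃ f : EuclideanSpace ℝ (Fin 3) → EuclideanSpace ℝ (Fin 3),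
      ContDiff ℝ 2 f ∧
      (∀ u : EuclideanSpace ℝ (Fin 3), ∀ i j : Fin 3, i ≠ j →
        0 < fderiv ℝ f u (EuclideanSpace.single j 1) i) ∧
      (∃ e₁ e₂ e₃ : EuclideanSpace ℝ (Fin 3),
        ∀ u : ℝ → EuclideanSpace ℝ (Fin 3),
          (∀ t : ℝ, 0 ≤ t → HasDerivAt u (f (u t)) t) →
          (Tendsto u atTop (nhds e₁) ∨ Tendsto u atTop (nhds e₂) ∨
            Tendsto u atTop (nhds e₃))) ∧
      Cardinal.mk
        {v : Set.Icc (-(Real.pi/2)) (Real.pi/2) → EuclideanSpace ℝ (Fin 3) |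
          ∃ u u' u'' : ℝ → EuclideanSpace ℝ (Fin 3),
            (∀ x ∈ Set.Icc (-(Real.pi/2)) (Real.pi/2),
              HasDerivWithinAt u (u' x) (Set.Icc (-(Real.pi/2)) (Real.pi/2)) x) ∧
            (∀ x ∈ Set.Icc (-(Real.pi/2)) (Real.pi/2),
              HasDerivWithinAt u' (u'' x) (Set.Icc (-(Real.pi/2)) (Real.pi/2)) x) ∧
            ContinuousOn u'' (Set.Icc (-(Real.pi/2)) (Real.pi/2)) ∧
            (∀ x ∈ Set.Ioo (-(Real.pi/2)) (Real.pi/2), u'' x + f (u x) = 0) ∧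
            u' (-(Real.pi/2)) = 0 ∧ u' (Real.pi/2) = 0 ∧
            (∃ x ∈ Set.Icc (-(Real.pi/2)) (Real.pi/2),
              ∃ y ∈ Set.Icc (-(Real.pi/2)) (Real.pi/2), u x ≠ u y) ∧
            v = fun x => u x.1}
        = Cardinal.continuum := by
  obtain ⟨R, hR⟩ := exists_bistable_eq_zero_iff
  refine ⟨coopField, contDiff_coopField, fun u i j hij => fderiv_coopField_single_pos u hij,
    ⟨(0 : ℝ) • ones, R • ones, (-R) • ones, fun u hu => ?_⟩, mk_neumannEquilibria_coopField⟩
  obtain ⟨m, hm, hlim⟩ := exists_tendsto_of_hasDerivAt_coopField hu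
  rcases (hR m).1 hm with rfl | rfl | rfl
  exacts [Or.inl hlim, Or.inr (Or.inl hlim), Or.inr (Or.inr hlim)]
end

section
/- Fix 0 < λ₁ < λ₂ and let g : ℝ² → ℝ² be any function with g(u) = α(u) for all u ∈ A. Then for every λ ∈ [λ₁, λ₂], the function φ_λ : [−π/2, π/2] → ℝ², φ_λ(x) := λ(cos(sin x), sin(sin x)), satisfies φ_λ''(x) + g(φ_λ(x)) = 0 for every x ∈ [−π/2, π/2], together with the Neumann boundary conditions φ_λ'(−π/2) = φ_λ'(π/2) = 0. In other words, φ_λ is an equilibrium of the reaction–diffusion system ∂u_i/∂t = Δu_i + g_i(u) on Ω = (−π/2, π/2) with Neumann boundary conditions. -/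
/-!
Writing `φ_λ = λ (cos θ, sin θ)` with angle `θ = sin x`, a curve of constant radius has
`φ'' = λ θ'' (-sin θ, cos θ) - λ θ'^2 (cos θ, sin θ)`. For `θ = sin x` we have `θ'' = -θ`
and `θ'^2 = cos² x = 1 - θ²`, so `φ'' = -α(φ)`; and `φ'` vanishes where `θ' = cos x` does,
at `±π/2`.
-/

open Real

section ConstantRadius

variable {r : ℝ} {θ : ℝ → ℝ}

theorem hasDerivAt_polar_const_radius {θ' x : ℝ} (hθ : HasDerivAt θ θ' x) :
    HasDerivAt (fun x => (r * cos (θ x), r * sin (θ x)))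
      (-(r * θ' * sin (θ x)), r * θ' * cos (θ x)) x := by
  convert (hθ.cos.const_mul r).prodMk (hθ.sin.const_mul r) using 2 <;> ring

theorem deriv_polar_const_radius {θ' : ℝ → ℝ} (hθ : ∀ x, HasDerivAt θ (θ' x) x) :
    deriv (fun x => (r * cos (θ x), r * sin (θ x))) =
      fun x => (-(r * θ' x * sin (θ x)), r * θ' x * cos (θ x)) :=
  funext fun x => (hasDerivAt_polar_const_radius (hθ x)).deriv

theorem hasDerivAt_deriv_polar_const_radius {θ' : ℝ → ℝ} {θ'' x : ℝ}
    (hθ : HasDerivAt θ (θ' x) x) (hθ' : HasDerivAt θ' θ'' x) :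
    HasDerivAt (fun x => (-(r * θ' x * sin (θ x)), r * θ' x * cos (θ x)))
      (-(r * (θ'' * sin (θ x) + θ' x ^ 2 * cos (θ x))),
        r * (θ'' * cos (θ x) - θ' x ^ 2 * sin (θ x))) x := by
  convert ((hθ'.const_mul r).fun_mul hθ.sin).fun_neg.prodMk
    ((hθ'.const_mul r).fun_mul hθ.cos) using 2 <;> ring

end ConstantRadius

theorem stmt4_general (l₁ l₂ : ℝ)
    (g : ℝ × ℝ → ℝ × ℝ)
    (hg : ∀ r θ : ℝ, l₁ ≤ r → r ≤ l₂ → -1 ≤ θ → θ ≤ 1 →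
      g (r * Real.cos θ, r * Real.sin θ) =
        (r * ((1 - θ^2) * Real.cos θ - θ * Real.sin θ),
         r * (θ * Real.cos θ + (1 - θ^2) * Real.sin θ)))
    (lam : ℝ) (hlam : lam ∈ Set.Icc l₁ l₂)
    (φ : ℝ → ℝ × ℝ)
    (hφ : φ = fun x => (lam * Real.cos (Real.sin x), lam * Real.sin (Real.sin x))) :
    (∀ x ∈ Set.Icc (-(Real.pi/2)) (Real.pi/2), deriv (deriv φ) x + g (φ x) = 0) ∧
    deriv φ (-(Real.pi/2)) = 0 ∧ deriv φ (Real.pi/2) = 0 := by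
  subst hφ
  have hφ' := deriv_polar_const_radius (r := lam) (θ := sin) hasDerivAt_sin
  refine ⟨fun x _ => ?_, by simp [hφ'], by simp [hφ']⟩
  have hφ'' := hasDerivAt_deriv_polar_const_radius (r := lam) (hasDerivAt_sin x)
    (hasDerivAt_cos x)
  rw [hφ', hφ''.deriv, hg lam (sin x) hlam.1 hlam.2 (neg_one_le_sin x) (sin_le_one x),
    Prod.mk_add_mk, Prod.mk_eq_zero]
  have hcos_sq : cos x ^ 2 = 1 - sin x ^ 2 := cos_sq' x
  constructor
  · linear_combination (-(lam * cos (sin x))) * hcos_sq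
  · linear_combination (-(lam * sin (sin x))) * hcos_sq

/-- **Corollary (a continuum of nonhomogeneous equilibria).**
Fix `0 < λ₁ < λ₂` and let `g : ℝ² → ℝ²` agree on the annular sector `A` with the
vector field `α(r(cos θ, sin θ)) = (r((1-θ²)cos θ - θ sin θ), r(θ cos θ + (1-θ²) sin θ))`.
Then for every `λ ∈ [λ₁, λ₂]` the arc `φ_λ(x) = (λ cos(sin x), λ sin(sin x))`
satisfies `φ_λ'' + g ∘ φ_λ = 0` on `[-π/2, π/2]` and the Neumann boundary
conditions `φ_λ'(±π/2) = 0`; i.e. it is an equilibrium of the reaction–diffusion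
system `∂u/∂t = Δu + g(u)` on `(-π/2, π/2)` with Neumann boundary conditions. -/
theorem stmt4 (l₁ l₂ : ℝ) (h1 : 0 < l₁) (h12 : l₁ < l₂)
    (g : ℝ × ℝ → ℝ × ℝ)
    (hg : ∀ r θ : ℝ, l₁ ≤ r → r ≤ l₂ → -1 ≤ θ → θ ≤ 1 →
      g (r * Real.cos θ, r * Real.sin θ) =
        (r * ((1 - θ^2) * Real.cos θ - θ * Real.sin θ),
         r * (θ * Real.cos θ + (1 - θ^2) * Real.sin θ)))
    (lam : ℝ) (hlam : lam ∈ Set.Icc l₁ l₂)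
    (φ : ℝ → ℝ × ℝ)
    (hφ : φ = fun x => (lam * Real.cos (Real.sin x), lam * Real.sin (Real.sin x))) :
    (∀ x ∈ Set.Icc (-(Real.pi/2)) (Real.pi/2), deriv (deriv φ) x + g (φ x) = 0) ∧
    deriv φ (-(Real.pi/2)) = 0 ∧ deriv φ (Real.pi/2) = 0 :=
  stmt4_general l₁ l₂ g hg lam hlam φ hφ
end

section
/- Let n ≥ 1, let θ : ℝⁿ → ℝ and γ : ℝ → ℝ be functions, let Q > 0, and let G : ℝⁿ → ℝⁿ satisfy S(G(u)) = 0 for every u ∈ ℝⁿ. Define M_i(u) := θ(u)(S(u)/n − u_i) + γ(S(u)) and f_i(u) := Q·M_i(u) + (1 − θ(u))·G_i(u) for i = 1,…,n. If u : I → ℝⁿ is differentiable on an interval I and satisfies u'(t) = f(u(t)) for all t ∈ I, then the function v(t) := S(u(t))/n is differentiable on I with v'(t) = Q·γ(n·v(t)) for all t ∈ I. -/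
open Finset

lemma Finset.sum_div_card_sub_eq_zero {ι : Type*} [Fintype ι] [Nonempty ι] (x : ι → ℝ) :
    ∑ i, ((∑ j, x j) / Fintype.card ι - x i) = 0 := by
  have hcard : (Fintype.card ι : ℝ) ≠ 0 := by positivity
  rw [sum_sub_distrib, sum_const, card_univ, nsmul_eq_mul, mul_div_cancel₀ _ hcard, sub_self]

/-- The drift `θ (S/n - xᵢ)` has zero total and `G` is tangent to the level sets of `S`, so only
`γ` contributes to the total of the field. -/
lemma sum_field_eq {ι : Type*} [Fintype ι] [Nonempty ι] (θ γ Q : ℝ) (x g m f : ι → ℝ)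
    (hg : ∑ i, g i = 0) (hm : ∀ i, m i = θ * ((∑ j, x j) / Fintype.card ι - x i) + γ)
    (hf : ∀ i, f i = Q * m i + (1 - θ) * g i) :
    ∑ i, f i = Fintype.card ι * (Q * γ) := by
  have hsum_m : ∑ i, m i = Fintype.card ι * γ := by
    simp only [hm, sum_add_distrib, ← mul_sum, sum_div_card_sub_eq_zero, sum_const, card_univ,
      nsmul_eq_mul, mul_zero, zero_add]
  simp only [hf, sum_add_distrib, ← mul_sum, hsum_m, hg, mul_zero, add_zero]
  ring

theorem EuclideanSpace.hasDerivWithinAt_sum_apply {ι : Type*} [Fintype ι]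
    {u : ℝ → EuclideanSpace ℝ ι} {u' : EuclideanSpace ℝ ι} {s : Set ℝ} {t : ℝ}
    (h : HasDerivWithinAt u u' s t) :
    HasDerivWithinAt (fun r => ∑ i, u r i) (∑ i, u' i) s t :=
  HasDerivWithinAt.fun_sum fun i _ =>
    (EuclideanSpace.proj (𝕜 := ℝ) i).hasFDerivAt.comp_hasDerivWithinAt t h

theorem stmt15_general (n : ℕ) (hn : 1 ≤ n)
    (θ : EuclideanSpace ℝ (Fin n) → ℝ) (γ : ℝ → ℝ)
    (Q : ℝ)
    (G : EuclideanSpace ℝ (Fin n) → EuclideanSpace ℝ (Fin n))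
    (hG : ∀ u : EuclideanSpace ℝ (Fin n), (∑ i, G u i) = 0)
    (M f : EuclideanSpace ℝ (Fin n) → EuclideanSpace ℝ (Fin n))
    (hM : ∀ u : EuclideanSpace ℝ (Fin n), ∀ i : Fin n,
      M u i = θ u * ((∑ j, u j) / n - u i) + γ (∑ j, u j))
    (hf : ∀ u : EuclideanSpace ℝ (Fin n), ∀ i : Fin n,
      f u i = Q * M u i + (1 - θ u) * G u i)
    (I : Set ℝ)
    (u : ℝ → EuclideanSpace ℝ (Fin n))
    (hu : ∀ t ∈ I, HasDerivWithinAt u (f (u t)) I t) :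
    ∀ t ∈ I, HasDerivWithinAt (fun s => (∑ j, u s j) / n)
      (Q * γ ((n : ℝ) * ((∑ j, u t j) / n))) I t := by
  intro t ht
  have : Nonempty (Fin n) := ⟨⟨0, hn⟩⟩
  have hn₀ : (n : ℝ) ≠ 0 := by positivity
  have hsum_f : ∑ i, f (u t) i = n * (Q * γ (∑ j, u t j)) := by
    simpa using sum_field_eq (θ (u t)) (γ (∑ j, u t j)) Q (u t) (G (u t)) (M (u t)) (f (u t))
      (hG (u t)) (by simpa using hM (u t)) (hf (u t))
  have hderiv := (EuclideanSpace.hasDerivWithinAt_sum_apply (hu t ht)).div_const (n : ℝ)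
  rw [hsum_f, mul_div_cancel_left₀ _ hn₀] at hderiv
  rwa [mul_div_cancel₀ _ hn₀]

/-- **Lemma (evolution of the average along the embedded system).**
Let `S(G(u)) = 0` for all `u`, `M_i(u) = θ(u)(S(u)/n - u_i) + γ(S(u))`, and
`f_i(u) = Q M_i(u) + (1 - θ(u)) G_i(u)` with `Q > 0` and `S(u) = u₁ + ⋯ + uₙ`.
Along any solution `u` of `u' = f(u)` on an interval `I`, the function
`v(t) = S(u(t))/n` is differentiable with `v'(t) = Q γ(n v(t))`. -/
theorem stmt15 (n : ℕ) (hn : 1 ≤ n)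
    (θ : EuclideanSpace ℝ (Fin n) → ℝ) (γ : ℝ → ℝ)
    (Q : ℝ) (hQ : 0 < Q)
    (G : EuclideanSpace ℝ (Fin n) → EuclideanSpace ℝ (Fin n))
    (hG : ∀ u : EuclideanSpace ℝ (Fin n), (∑ i, G u i) = 0)
    (M f : EuclideanSpace ℝ (Fin n) → EuclideanSpace ℝ (Fin n))
    (hM : ∀ u : EuclideanSpace ℝ (Fin n), ∀ i : Fin n,
      M u i = θ u * ((∑ j, u j) / n - u i) + γ (∑ j, u j))
    (hf : ∀ u : EuclideanSpace ℝ (Fin n), ∀ i : Fin n,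
      f u i = Q * M u i + (1 - θ u) * G u i)
    (I : Set ℝ) (hI : I.OrdConnected)
    (u : ℝ → EuclideanSpace ℝ (Fin n))
    (hu : ∀ t ∈ I, HasDerivWithinAt u (f (u t)) I t) :
    ∀ t ∈ I, HasDerivWithinAt (fun s => (∑ j, u s j) / n)
      (Q * γ ((n : ℝ) * ((∑ j, u t j) / n))) I t :=
  stmt15_general n hn θ γ Q G hG M f hM hf I u hu
end
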